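/- If N = q^k * n^2 is an odd perfect number in Eulerian form with k = 1, then I(q) + I(n) > 3/2^(1/3), where I(x) = σ(x)/x. -/

import Mathlib

/-!
With `k = 1`, multiplicativity of `σ` turns `I(q n²) = 2` into `I(q) · I(n²) = 2`, and
`σ(n²) ≤ σ(n)²` gives `I(q) · I(n)² ≥ 2`. AM-GM for `I(q), I(n)/2, I(n)/2` then yields
`(I(q) + I(n))³ ≥ 27/2`, strictly since `I(q) ≥ 1`.
-/

/-- The sum-of-divisors function. -/
def sigma (n : ℕ) : ℕ := ∑ d ∈ n.divisors, d

/-- The abundancy index as a rational number. -/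
noncomputable def Iq (x : ℕ) : ℚ := (sigma x : ℚ) / x

/-- The abundancy index as a real number. -/
noncomputable def Ir (x : ℕ) : ℝ := (sigma x : ℝ) / x

theorem sigma_mul_le (m n : ℕ) : sigma (m * n) ≤ sigma m * sigma n := by
  simp only [sigma]
  rw [Finset.sum_mul_sum, ← Finset.sum_product', Nat.divisors_mul, ← Finset.image_mul_product]
  exact Finset.sum_image_le_of_nonneg fun _ _ ↦ Nat.zero_le _

theorem sigma_mul_of_coprime {m n : ℕ} (h : m.Coprime n) : sigma (m * n) = sigma m * sigma n :=
  h.sum_divisors_mul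

theorem le_sigma {n : ℕ} (hn : n ≠ 0) : n ≤ sigma n :=
  Finset.single_le_sum (f := id) (fun _ _ ↦ Nat.zero_le _) (Nat.mem_divisors_self n hn)

theorem Ir_nonneg (n : ℕ) : 0 ≤ Ir n := by unfold Ir; positivity

theorem one_le_Ir {n : ℕ} (hn : n ≠ 0) : 1 ≤ Ir n := by
  rw [Ir, one_le_div (by positivity)]
  exact_mod_cast le_sigma hn

theorem Ir_mul_le (m n : ℕ) : Ir (m * n) ≤ Ir m * Ir n := by
  rw [Ir, Ir, Ir, div_mul_div_comm, Nat.cast_mul]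
  gcongr
  exact_mod_cast sigma_mul_le m n

theorem Ir_mul_of_coprime {m n : ℕ} (h : m.Coprime n) : Ir (m * n) = Ir m * Ir n := by
  rw [Ir, Ir, Ir, div_mul_div_comm, sigma_mul_of_coprime h, Nat.cast_mul, Nat.cast_mul]

theorem Ir_eq_two_of_perfect {N : ℕ} (hN : N ≠ 0) (h : sigma N = 2 * N) : Ir N = 2 := by
  rw [Ir, h, Nat.cast_mul, Nat.cast_two, mul_div_cancel_right₀ _ (by exact_mod_cast hN)]

theorem div_cbrt_two_lt {x y : ℝ} (hx : 0 ≤ x) (h : y ^ 3 < 2 * x ^ 3) :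
    y / (2 : ℝ) ^ ((1 : ℝ) / 3) < x := by
  have hc : ((2 : ℝ) ^ ((1 : ℝ) / 3)) ^ 3 = 2 := by
    rw [one_div]; exact Real.rpow_inv_natCast_pow (by norm_num) (by norm_num)
  rw [div_lt_iff₀ (by positivity)]
  refine lt_of_pow_lt_pow_left₀ 3 (by positivity) ?_
  rwa [mul_pow, hc, mul_comm]

theorem three_div_cbrt_two_lt_add {a b : ℝ} (ha : 1 ≤ a) (hb : 0 ≤ b) (hab : 2 ≤ a * b ^ 2) :
    3 / (2 : ℝ) ^ ((1 : ℝ) / 3) < a + b := by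
  refine div_cbrt_two_lt (by positivity) ?_
  norm_num
  -- AM-GM for `a, b/2, b/2`: `4 (a + b)³ - 27 a b² = (2a - b)² (a + 4b)`; equality would force
  -- `b = 2a` and `4a³ = 2`, which `1 ≤ a` excludes.
  have ha' : 0 ≤ (a - 1) * b := mul_nonneg (by linarith) hb
  nlinarith [mul_nonneg (sq_nonneg (2 * a - b)) (by positivity : 0 ≤ a + 4 * b),
    mul_nonneg ha' hb]

theorem stmt11_general (q k n N : ℕ)
    (hco : Nat.Coprime q n) (hN : N = q ^ k * n ^ 2)
    (hodd : Odd N) (hperf : sigma N = 2 * N) (hk : k = 1) :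
    Ir q + Ir n > 3 / (2 : ℝ) ^ ((1 : ℝ) / 3) := by
  subst hk hN
  rw [pow_one] at hodd hperf
  have hq : q ≠ 0 := left_ne_zero_of_mul hodd.pos.ne'
  have hprod : 2 ≤ Ir q * Ir n ^ 2 :=
    calc 2 = Ir (q * n ^ 2) := (Ir_eq_two_of_perfect hodd.pos.ne' hperf).symm
      _ = Ir q * Ir (n * n) := by rw [Ir_mul_of_coprime (hco.pow_right 2), sq]
      _ ≤ Ir q * Ir n ^ 2 := by grw [Ir_mul_le, sq]; exact Ir_nonneg q
  exact three_div_cbrt_two_lt_add (one_le_Ir hq) (Ir_nonneg n) hprod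

theorem stmt11 (q k n N : ℕ)
    (hq : Nat.Prime q) (hq4 : q % 4 = 1) (hk4 : k % 4 = 1)
    (hco : Nat.Coprime q n) (hN : N = q ^ k * n ^ 2)
    (hodd : Odd N) (hperf : sigma N = 2 * N) (hk : k = 1) :
    Ir q + Ir n > 3 / (2 : ℝ) ^ ((1 : ℝ) / 3) :=
  stmt11_general q k n N hco hN hodd hperf hk
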